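/- arXiv:1105.2909 — 5 statements merged into one kernel-verified Lean document; each statement's English description precedes it below -/
import Mathlib

section
/- If a graph G on n vertices contains no 4-cycle (no C4 subgraph), then the number of edges of G is at most (n/4)(1 + √(4n − 3)). -/
/-!
Count cherries: triples `(v, a, b)` with `a ≠ b` both adjacent to `v`. In a C₄-free graph two
distinct vertices have at most one common neighbour, so the pair `(a, b)` determines `v`, whence
`∑ d(v)(d(v) - 1) ≤ n(n - 1)`. Cauchy–Schwarz and `∑ d(v) = 2e` turn this into the quadratic
inequality `4e² ≤ n(n² - n + 2e)`, whose larger root is `(n/4)(1 + √(4n - 3))`.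
-/

/-- `G` contains a 4-cycle: four distinct vertices joined cyclically. -/
def HasC4 {V : Type*} (G : SimpleGraph V) : Prop :=
  ∃ a b c d : V, a ≠ b ∧ a ≠ c ∧ a ≠ d ∧ b ≠ c ∧ b ≠ d ∧ c ≠ d ∧
    G.Adj a b ∧ G.Adj b c ∧ G.Adj c d ∧ G.Adj d a

open Finset

namespace SimpleGraph

variable {V : Type*} {G : SimpleGraph V}

lemma eq_of_adj_of_not_hasC4 (h : ¬ HasC4 G) {a b v w : V} (hab : a ≠ b)
    (hva : G.Adj v a) (hvb : G.Adj v b) (hwa : G.Adj w a) (hwb : G.Adj w b) : v = w := by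
  by_contra hvw
  exact h ⟨a, v, b, w, hva.ne', hab, hwa.ne', hvb.ne, hvw, hwb.ne', hva.symm, hvb, hwb.symm, hwa⟩

variable [Fintype V] [DecidableRel G.Adj]

lemma sum_card_offDiag_neighborFinset_le (h : ¬ HasC4 G) :
    ∑ v, #(G.neighborFinset v).offDiag ≤ #(univ : Finset V).offDiag := by
  rw [← card_sigma]
  refine card_le_card_of_injOn Sigma.snd (fun _ hx ↦ by simp_all) ?_
  rintro ⟨v, a, b⟩ hv ⟨w, a', b'⟩ hw hab
  obtain ⟨rfl, rfl⟩ := Prod.ext_iff.mp hab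
  simp only [coe_sigma, Set.mem_sigma_iff, mem_coe, mem_offDiag, mem_neighborFinset] at hv hw
  obtain rfl := eq_of_adj_of_not_hasC4 h hv.2.2.2 hv.2.1 hv.2.2.1 hw.2.1 hw.2.2.1
  rfl

lemma sum_degree_sq_le (h : ¬ HasC4 G) :
    ∑ v, (G.degree v : ℝ) ^ 2 ≤ (Fintype.card V : ℝ) ^ 2 - Fintype.card V + 2 * #G.edgeFinset := by
  have hcast (s : Finset V) : (#s.offDiag : ℝ) = (#s : ℝ) ^ 2 - #s := by
    rw [offDiag_card, Nat.cast_sub (Nat.le_mul_self _)]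
    push_cast
    ring
  have hcherries :
      ∑ v, ((G.degree v : ℝ) ^ 2 - G.degree v) ≤ (Fintype.card V : ℝ) ^ 2 - Fintype.card V := by
    have := sum_card_offDiag_neighborFinset_le h
    rw [← @Nat.cast_le ℝ, Nat.cast_sum] at this
    simpa only [hcast, card_neighborFinset_eq_degree, card_univ] using this
  have hsum : ∑ v, (G.degree v : ℝ) = 2 * #G.edgeFinset := by
    exact_mod_cast G.sum_degrees_eq_twice_card_edges
  rw [sum_sub_distrib, hsum] at hcherries
  linarith

end SimpleGraph

lemma le_div_four_mul_one_add_sqrt_of_sq_le {e n : ℝ} (hn : 0 ≤ n)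
    (h : (2 * e) ^ 2 ≤ n * (n ^ 2 - n + 2 * e)) : e ≤ n / 4 * (1 + √(4 * n - 3)) := by
  have hsq : 4 * e - n ≤ n * √(4 * n - 3) :=
    calc 4 * e - n ≤ |4 * e - n| := le_abs_self _
      _ ≤ √(n ^ 2 * (4 * n - 3)) := Real.abs_le_sqrt (by nlinarith)
      _ = n * √(4 * n - 3) := by rw [Real.sqrt_mul (sq_nonneg n), Real.sqrt_sq hn]
  linarith

/-- Kővári–Sós–Turán / Reiman bound: a C₄-free graph on `n` vertices has at most
`(n/4)(1 + √(4n − 3))` edges. -/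
theorem stmt3 {V : Type*} [Fintype V] (G : SimpleGraph V) [DecidableRel G.Adj]
    (h : ¬ HasC4 G) :
    (G.edgeFinset.card : ℝ) ≤
      (Fintype.card V : ℝ) / 4 * (1 + Real.sqrt (4 * (Fintype.card V : ℝ) - 3)) := by
  refine le_div_four_mul_one_add_sqrt_of_sq_le (Nat.cast_nonneg _) ?_
  calc (2 * (#G.edgeFinset : ℝ)) ^ 2 = (∑ v, (G.degree v : ℝ)) ^ 2 := by
        exact_mod_cast congrArg (· ^ 2) G.sum_degrees_eq_twice_card_edges.symm
    _ ≤ Fintype.card V * ∑ v, (G.degree v : ℝ) ^ 2 := by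
        rw [← card_univ]
        exact sq_sum_le_card_mul_sum_sq
    _ ≤ _ := by gcongr; exact G.sum_degree_sq_le h
end

section
/- Let H be a bipartite graph with parts U and V of equal cardinality, and let u* ∈ U, v* ∈ V. If every vertex x of H other than u* and v* has degree at least |V|/2, and both u* and v* have positive degree, then H has a perfect matching. -/
/-- The matching lemma of Cabello and Jakovac: a balanced bipartite graph in which
every vertex except possibly `u*` and `v*` (one in each part) has degree at least
half the part size, and `u*`, `v*` have positive degree, has a perfect matching. -/
theorem stmt4 {W : Type*} [Fintype W] [DecidableEq W] (H : SimpleGraph W)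
    [DecidableRel H.Adj] (U B : Finset W)
    (hunion : U ∪ B = Finset.univ) (hdisj : Disjoint U B)
    (hbip : ∀ u v, H.Adj u v → (u ∈ U ∧ v ∈ B) ∨ (u ∈ B ∧ v ∈ U))
    (hcard : U.card = B.card)
    (ustar vstar : W) (hu : ustar ∈ U) (hv : vstar ∈ B)
    (hdeg : ∀ x, x ≠ ustar → x ≠ vstar → B.card ≤ 2 * H.degree x)
    (hu0 : 0 < H.degree ustar) (hv0 : 0 < H.degree vstar) :
    ∃ M : H.Subgraph, M.IsPerfectMatching := by
  classical
  set n := B.card with hn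
  -- neighbors of a vertex in U lie in B, and vice versa
  have hnbrB : ∀ x ∈ U, H.neighborFinset x ⊆ B := by
    intro x hx y hy
    rw [SimpleGraph.mem_neighborFinset] at hy
    rcases hbip x y hy with ⟨_, h2⟩ | ⟨h1, _⟩
    · exact h2
    · exact absurd hx (Finset.disjoint_right.mp hdisj h1)
  have hnbrU : ∀ x ∈ B, H.neighborFinset x ⊆ U := by
    intro x hx y hy
    rw [SimpleGraph.mem_neighborFinset] at hy
    rcases hbip x y hy with ⟨h1, _⟩ | ⟨_, h2⟩
    · exact absurd hx (Finset.disjoint_left.mp hdisj h1)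
    · exact h2
  -- Hall's condition for the family of neighborhoods indexed by ↥U
  have hall : ∀ s : Finset ↥U,
      s.card ≤ (s.biUnion (fun x => H.neighborFinset (x : W))).card := by
    intro s
    set N := s.biUnion (fun x : ↥U => H.neighborFinset (x : W)) with hN
    have hNB : N ⊆ B := by
      intro y hy
      rw [hN, Finset.mem_biUnion] at hy
      obtain ⟨x, _, hx⟩ := hy
      exact hnbrB x x.2 hx
    have hsub : ∀ x ∈ s, H.neighborFinset ((x : ↥U) : W) ⊆ N := by
      intro x hx
      exact Finset.subset_biUnion_of_mem (fun x : ↥U => H.neighborFinset (x : W)) hx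
    have hscard : s.card ≤ U.card := by
      calc s.card ≤ Finset.univ.card := Finset.card_le_card (Finset.subset_univ s)
      _ = U.card := Fintype.card_coe U
    by_cases hall_empty : s = ∅
    · simp [hall_empty]
    obtain ⟨x0, hx0⟩ := Finset.nonempty_iff_ne_empty.mpr hall_empty
    by_cases hexx : ∃ x ∈ s, (x : W) ≠ ustar
    · obtain ⟨x, hxs, hxne⟩ := hexx
      have hxnv : (x : W) ≠ vstar := fun h =>
        Finset.disjoint_left.mp hdisj x.2 (h ▸ hv)
      have hdegx : n ≤ 2 * H.degree (x : W) := hdeg _ hxne hxnv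
      by_cases hsmall : 2 * s.card ≤ n
      · -- s.card ≤ deg x ≤ |N|
        have : 2 * s.card ≤ 2 * H.degree (x : W) := le_trans hsmall hdegx
        have h1 : s.card ≤ H.degree (x : W) := by omega
        calc s.card ≤ H.degree (x : W) := h1
          _ = (H.neighborFinset (x : W)).card := (H.card_neighborFinset_eq_degree _).symm
          _ ≤ N.card := Finset.card_le_card (hsub x hxs)
      · push_neg at hsmall
        -- every b ∈ B, b ≠ vstar, is in N
        have hbN : ∀ b ∈ B, b ≠ vstar → b ∈ N := by
          intro b hb hbv
          have hbu : b ≠ ustar := fun h =>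
            Finset.disjoint_left.mp hdisj (h ▸ hu) hb
          have hdegb : n ≤ 2 * H.degree b := hdeg b hbu hbv
          by_contra hbnotN
          -- then neighbors of b avoid the image of s in U
          have himg : ∀ u ∈ H.neighborFinset b, u ∈ U \ s.image Subtype.val := by
            intro u hu'
            rw [Finset.mem_sdiff]
            refine ⟨hnbrU b hb hu', fun hmem => ?_⟩
            rw [Finset.mem_image] at hmem
            obtain ⟨u', hu's, rfl⟩ := hmem
            apply hbnotN
            apply hsub u' hu's
            rw [SimpleGraph.mem_neighborFinset] at hu' ⊢
            exact hu'.symm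
          have hcard_img : (s.image Subtype.val).card = s.card :=
            Finset.card_image_of_injective _ Subtype.val_injective
          have himgU : s.image Subtype.val ⊆ U := by
            intro y hy
            rw [Finset.mem_image] at hy
            obtain ⟨y', _, rfl⟩ := hy
            exact y'.2
          have h2 : H.degree b ≤ U.card - s.card := by
            calc H.degree b = (H.neighborFinset b).card :=
                  (H.card_neighborFinset_eq_degree _).symm
              _ ≤ (U \ s.image Subtype.val).card :=
                  Finset.card_le_card (fun u hu' => himg u hu')
              _ = U.card - s.card := by
                  rw [Finset.card_sdiff_of_subset himgU, hcard_img]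
          have hsU : s.card ≤ U.card := hscard
          omega
        have hBsub : B \ {vstar} ⊆ N := by
          intro b hb
          rw [Finset.mem_sdiff, Finset.mem_singleton] at hb
          exact hbN b hb.1 hb.2
        by_cases hlast : s.card ≤ n - 1
        · calc s.card ≤ n - 1 := hlast
            _ = (B \ {vstar}).card := by
               rw [Finset.card_sdiff_of_subset (Finset.singleton_subset_iff.mpr hv),
                 Finset.card_singleton]
            _ ≤ N.card := Finset.card_le_card hBsub
        · -- s.card = n, so s = univ, and vstar ∈ N too
          have hn0 : 0 < n := by omega
          have hscards : s.card = U.card := by omega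
          have hsuniv : s = Finset.univ := by
            apply Finset.eq_univ_of_card
            rw [hscards, Fintype.card_coe]
          obtain ⟨u, hu'⟩ := Finset.card_pos.mp
            (by rw [H.card_neighborFinset_eq_degree]; exact hv0 :
              0 < (H.neighborFinset vstar).card)
          have huU : u ∈ U := hnbrU vstar hv hu'
          have hvN : vstar ∈ N := by
            apply hsub ⟨u, huU⟩ (by simp [hsuniv])
            rw [SimpleGraph.mem_neighborFinset] at hu' ⊢
            exact hu'.symm
          have hBN : B ⊆ N := by
            intro b hb
            by_cases hbv : b = vstar
            · exact hbv ▸ hvN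
            · exact hbN b hb hbv
          calc s.card ≤ U.card := hscard
            _ = n := hcard
            _ = B.card := rfl
            _ ≤ N.card := Finset.card_le_card hBN
    · -- all elements of s equal ustar, so s has exactly one element
      push_neg at hexx
      have hsing : s ⊆ {⟨ustar, hu⟩} := by
        intro x hx
        rw [Finset.mem_singleton]
        exact Subtype.ext (hexx x hx)
      have hs1 : s.card ≤ 1 := le_trans (Finset.card_le_card hsing)
        (le_of_eq (Finset.card_singleton _))
      have hx0u : (x0 : W) = ustar := hexx x0 hx0
      have hN1 : 0 < N.card := by
        apply Finset.card_pos.mpr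
        obtain ⟨y, hy⟩ := Finset.card_pos.mp
          (by rw [H.card_neighborFinset_eq_degree]; exact hu0 :
            0 < (H.neighborFinset ustar).card)
        exact ⟨y, hsub x0 hx0 (by rw [hx0u]; exact hy)⟩
      omega
  -- Apply Hall's theorem
  obtain ⟨f, hfinj, hf⟩ :=
    (Finset.all_card_le_biUnion_card_iff_exists_injective
      (fun x : ↥U => H.neighborFinset (x : W))).mp hall
  -- f maps into B
  have hfB : ∀ x : ↥U, f x ∈ B := fun x => hnbrB _ x.2 (hf x)
  have hfadj : ∀ x : ↥U, H.Adj (x : W) (f x) := fun x =>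
    (SimpleGraph.mem_neighborFinset _ _ _).mp (hf x)
  let g : ↥U → ↥B := fun x => ⟨f x, hfB x⟩
  have hginj : Function.Injective g := fun a b hab =>
    hfinj (congrArg Subtype.val hab)
  have hgbij : Function.Bijective g := by
    rw [Fintype.bijective_iff_injective_and_card]
    exact ⟨hginj, by rw [Fintype.card_coe, Fintype.card_coe, hcard]⟩
  let e : ↥U ≃ ↥B := Equiv.ofBijective g hgbij
  -- build the matching
  have hdisj' : Disjoint (↑U : Set W) (↑B : Set W) := by
    rw [Finset.disjoint_coe]; exact hdisj
  let eU : (↑U : Set W) ≃ ↥U := Equiv.subtypeEquivRight (fun x => Finset.mem_coe)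
  let eB : (↑B : Set W) ≃ ↥B := Equiv.subtypeEquivRight (fun x => Finset.mem_coe)
  let e' : (↑U : Set W) ≃ (↑B : Set W) := eU.trans (e.trans eB.symm)
  obtain ⟨M, hM1, hM2⟩ := SimpleGraph.Subgraph.IsMatching.exists_of_disjoint_sets_of_equiv
    (G := H) hdisj' e' (fun v => by
      show H.Adj _ _
      exact hfadj ⟨v.1, v.2⟩)
  refine ⟨M, hM2, ?_⟩
  rw [SimpleGraph.Subgraph.isSpanning_iff, hM1]
  rw [← Finset.coe_union, hunion, Finset.coe_univ]
end

section
/- Let d ≥ 4 and let G be a d-regular graph containing no 4-cycle. Let T be a minimum edge-cut of G that is not trivial, and let G₁ be a connected component of G \ T. Then |V(G₁)| ≥ d + 4. -/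
def IsEdgeCut {V : Type*} (G : SimpleGraph V) (T : Finset (Sym2 V)) : Prop :=
  ↑T ⊆ G.edgeSet ∧ ¬ (G.deleteEdges ↑T).Connected

def IsMinEdgeCut {V : Type*} (G : SimpleGraph V) (T : Finset (Sym2 V)) : Prop :=
  IsEdgeCut G T ∧ ∀ T' : Finset (Sym2 V), IsEdgeCut G T' → T.card ≤ T'.card

def IsTrivialEdgeCut {V : Type*} (G : SimpleGraph V) (T : Finset (Sym2 V)) : Prop :=
  ∃ v : V, (↑T : Set (Sym2 V)) = {e ∈ G.edgeSet | v ∈ e}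

open Finset SimpleGraph

namespace SimpleGraph

variable {V : Type*}

theorem ConnectedComponent.exists_notMem_supp {H : SimpleGraph V} (h : ¬ H.Connected)
    (c : H.ConnectedComponent) : ∃ w, w ∉ c.supp := by
  by_contra! hall
  obtain ⟨u, rfl⟩ := c.exists_rep
  exact h (connected_iff_exists_forall_reachable H |>.mpr
    ⟨u, fun w => ConnectedComponent.exact (hall w).symm⟩)

variable [Fintype V] [DecidableEq V] (G : SimpleGraph V) [DecidableRel G.Adj]

def edgeBoundary (A : Finset V) : Finset (Sym2 V) :=
  A.biUnion fun v => (G.neighborFinset v \ A).image fun w => s(v, w)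

variable {G}

theorem mem_edgeBoundary {A : Finset V} {e : Sym2 V} :
    e ∈ G.edgeBoundary A ↔ ∃ v ∈ A, ∃ w ∉ A, G.Adj v w ∧ s(v, w) = e := by
  simp only [edgeBoundary, mem_biUnion, mem_image, mem_sdiff, mem_neighborFinset, and_assoc]
  grind

theorem edgeBoundary_subset_edgeFinset (A : Finset V) : G.edgeBoundary A ⊆ G.edgeFinset := by
  intro e he
  obtain ⟨v, -, w, -, hvw, rfl⟩ := mem_edgeBoundary.mp he
  simpa using hvw

theorem card_edgeBoundary (A : Finset V) :
    #(G.edgeBoundary A) = ∑ v ∈ A, #(G.neighborFinset v \ A) := by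
  rw [edgeBoundary, card_biUnion]
  · exact sum_congr rfl fun v _ => card_image_of_injective _ fun _ _ => Sym2.congr_right.mp
  · intro v hv v' hv' hne
    rw [Function.onFun, Finset.disjoint_left]
    simp only [mem_image, mem_sdiff]
    rintro _ ⟨w, ⟨-, hw⟩, rfl⟩ ⟨w', ⟨-, -⟩, he⟩
    rcases Sym2.eq_iff.mp he with ⟨h, -⟩ | ⟨h, -⟩
    · exact hne h.symm
    · exact hw (h ▸ hv')

theorem card_edgeBoundary_add_sum_card_inter (A : Finset V) :
    #(G.edgeBoundary A) + ∑ v ∈ A, #(G.neighborFinset v ∩ A) = ∑ v ∈ A, G.degree v := by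
  rw [card_edgeBoundary, ← sum_add_distrib]
  exact sum_congr rfl fun v _ => by rw [card_sdiff_add_card_inter, card_neighborFinset_eq_degree]

theorem card_edgeBoundary_singleton (v : V) : #(G.edgeBoundary {v}) = G.degree v := by
  simpa using card_edgeBoundary_add_sum_card_inter (G := G) {v}

theorem coe_edgeBoundary_singleton (v : V) :
    (G.edgeBoundary {v} : Set (Sym2 V)) = {e ∈ G.edgeSet | v ∈ e} := by
  ext e
  induction e with
  | _ a b =>
    simp only [mem_coe, mem_edgeBoundary, mem_singleton, exists_eq_left, Set.mem_ofPred_eq,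
      mem_edgeSet, Sym2.mem_iff]
    constructor
    · rintro ⟨w, -, hvw, he⟩
      rcases Sym2.eq_iff.mp he with ⟨rfl, rfl⟩ | ⟨rfl, rfl⟩
      exacts [⟨hvw, .inl rfl⟩, ⟨hvw.symm, .inr rfl⟩]
    · rintro ⟨hab, rfl | rfl⟩
      · exact ⟨b, hab.ne', hab, rfl⟩
      · exact ⟨a, hab.ne, hab.symm, Sym2.eq_swap⟩

theorem isEdgeCut_edgeBoundary {A : Finset V} {u w : V} (hu : u ∈ A) (hw : w ∉ A) :
    IsEdgeCut G (G.edgeBoundary A) := by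
  refine ⟨fun e he => mem_edgeFinset.mp (edgeBoundary_subset_edgeFinset A he), fun hconn => ?_⟩
  obtain ⟨p⟩ := hconn.preconnected u w
  obtain ⟨⟨⟨a, b⟩, hab⟩, -, ha, hb⟩ := p.exists_boundary_dart A hu hw
  rw [deleteEdges_adj] at hab
  exact hab.2 (mem_edgeBoundary.mpr ⟨a, ha, b, hb, hab.1, rfl⟩)

theorem edgeBoundary_subset_of_coe_eq_supp {T : Finset (Sym2 V)} {A : Finset V}
    {c : (G.deleteEdges ↑T).ConnectedComponent} (hA : ↑A = c.supp) :
    G.edgeBoundary A ⊆ T := by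
  intro e he
  obtain ⟨v, hv, w, hw, hvw, rfl⟩ := mem_edgeBoundary.mp he
  by_contra heT
  have hadj : (G.deleteEdges ↑T).Adj v w := deleteEdges_adj.mpr ⟨hvw, heT⟩
  rw [← mem_coe, hA, ConnectedComponent.mem_supp_iff] at hv hw
  exact hw (ConnectedComponent.connectedComponentMk_eq_of_adj hadj.symm ▸ hv)

theorem _root_.IsMinEdgeCut.edgeBoundary_eq {T : Finset (Sym2 V)} (hT : IsMinEdgeCut G T)
    {A : Finset V} {c : (G.deleteEdges ↑T).ConnectedComponent} (hA : ↑A = c.supp) :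
    G.edgeBoundary A = T := by
  obtain ⟨u, hu⟩ := c.nonempty_supp
  obtain ⟨w, hw⟩ := c.exists_notMem_supp hT.1.2
  rw [← hA, mem_coe] at hu hw
  exact eq_of_subset_of_card_le (edgeBoundary_subset_of_coe_eq_supp hA)
    (hT.2 _ (isEdgeCut_edgeBoundary hu hw))

theorem sum_card_offDiag_neighborFinset_inter_le (hC4 : ¬ HasC4 G) (A : Finset V) :
    ∑ v ∈ A, #(G.neighborFinset v ∩ A).offDiag ≤ #A.offDiag := by
  rw [← card_sigma]
  refine card_le_card_of_injOn Sigma.snd (fun p hp => ?_) fun ⟨v, a, b⟩ hp ⟨v', a', b'⟩ hp' he => ?_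
  · simp only [coe_sigma, Set.mem_sigma_iff, mem_coe, mem_offDiag, mem_inter] at hp ⊢
    exact ⟨hp.2.1.2, hp.2.2.1.2, hp.2.2.2⟩
  · simp only [coe_sigma, Set.mem_sigma_iff, mem_coe, mem_offDiag, mem_inter,
      mem_neighborFinset] at hp hp'
    obtain ⟨rfl, rfl⟩ := Prod.ext_iff.mp he
    obtain rfl : v = v' := by
      by_contra hne
      exact hC4 ⟨v, a, v', b, hp.2.1.1.ne, hne, hp.2.2.1.1.ne, hp'.2.1.1.ne', hp.2.2.2,
        hp'.2.2.1.1.ne, hp.2.1.1, hp'.2.1.1.symm, hp'.2.2.1.1, hp.2.2.1.1.symm⟩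
    rfl

theorem sq_sum_card_neighborFinset_inter_le (hC4 : ¬ HasC4 G) (A : Finset V) :
    (∑ v ∈ A, #(G.neighborFinset v ∩ A)) ^ 2 ≤
      #A * (#A * #A - #A + ∑ v ∈ A, #(G.neighborFinset v ∩ A)) := by
  calc (∑ v ∈ A, #(G.neighborFinset v ∩ A)) ^ 2
      ≤ #A * ∑ v ∈ A, #(G.neighborFinset v ∩ A) ^ 2 := sq_sum_le_card_mul_sum_sq
    _ = #A * (∑ v ∈ A, #(G.neighborFinset v ∩ A).offDiag +
          ∑ v ∈ A, #(G.neighborFinset v ∩ A)) := by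
      rw [← sum_add_distrib]
      congr 1
      refine sum_congr rfl fun v _ => ?_
      rw [offDiag_card, sq, Nat.sub_add_cancel (Nat.le_mul_self _)]
    _ ≤ #A * (#A * #A - #A + ∑ v ∈ A, #(G.neighborFinset v ∩ A)) := by
      rw [← offDiag_card]
      gcongr
      exact sum_card_offDiag_neighborFinset_inter_le hC4 A

end SimpleGraph

/- From `S ≥ d (n - 1) ≥ n / 2` and the monotonicity of `S ↦ S ^ 2 - n S` there,
`hq` forces `d ^ 2 (n - 1) ≤ d n + n ^ 2`, which fails for `2 ≤ n ≤ d + 3` once `d ≥ 4`. -/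
theorem add_four_le_of_sq_le {d n S : ℕ} (hd : 4 ≤ d) (hn : 2 ≤ n) (hS : d * n ≤ S + d)
    (hq : S ^ 2 ≤ n * (n * n - n + S)) : d + 4 ≤ n := by
  by_contra! hlt
  zify [Nat.le_mul_self n] at hS hq
  have hnd : (n : ℤ) ≤ d + 3 := by omega
  have hdn : (0 : ℤ) < d ^ 2 * (n - 1) - d * n - n ^ 2 := by
    nlinarith [mul_nonneg (by linarith : (0 : ℤ) ≤ n - 2)
        (by nlinarith : (0 : ℤ) ≤ d ^ 2 - 2 * d - 5),
      mul_nonneg (by linarith : (0 : ℤ) ≤ n - 2) (by linarith : (0 : ℤ) ≤ d + 3 - n)]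
  have hlow : (n : ℤ) ^ 2 * (n - 1) < d * (n - 1) * (d * (n - 1) - n) := by
    nlinarith [mul_pos (by linarith : (0 : ℤ) < n - 1) hdn]
  have hS' : (0 : ℤ) ≤ S - d * (n - 1) := by linarith
  have hmono : (d * (n - 1) * (d * (n - 1) - n) : ℤ) ≤ S ^ 2 - n * S := by
    nlinarith [mul_nonneg hS' (by nlinarith : (0 : ℤ) ≤ S + d * (n - 1) - n)]
  nlinarith

theorem stmt5_general {V : Type*} [Fintype V] (G : SimpleGraph V) [DecidableRel G.Adj]
    (d : ℕ) (hd : 4 ≤ d) (hreg : G.IsRegularOfDegree d) (hC4 : ¬ HasC4 G)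
    (T : Finset (Sym2 V)) (hmin : IsMinEdgeCut G T) (hnt : ¬ IsTrivialEdgeCut G T)
    (c : (G.deleteEdges ↑T).ConnectedComponent) :
    d + 4 ≤ c.supp.ncard := by
  classical
  set A := c.supp.toFinset
  have hA : ↑A = c.supp := Set.coe_toFinset _
  have hT : G.edgeBoundary A = T := hmin.edgeBoundary_eq hA
  obtain ⟨u, hu⟩ : ∃ u, u ∈ A := c.nonempty_supp.imp fun _ => Set.mem_toFinset.mpr
  obtain ⟨w, hw⟩ : ∃ w, w ∉ A :=
    (c.exists_notMem_supp hmin.1.2).imp fun _ => mt Set.mem_toFinset.mp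
  have hTd : #T ≤ d := by
    rw [← hreg u, ← card_edgeBoundary_singleton]
    exact hmin.2 _ (isEdgeCut_edgeBoundary (mem_singleton_self u)
      (by simpa using (ne_of_mem_of_not_mem hu hw).symm))
  have hn : 2 ≤ #A := by
    by_contra! h
    have hAu : A = {u} :=
      eq_singleton_iff_unique_mem.mpr ⟨hu, fun v hv => card_le_one.mp (by omega) v hv u hu⟩
    exact hnt ⟨u, hT ▸ hAu ▸ coe_edgeBoundary_singleton u⟩
  have hcount := card_edgeBoundary_add_sum_card_inter (G := G) A
  rw [hT, sum_congr rfl fun v _ => hreg v, sum_const, smul_eq_mul] at hcount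
  rw [Set.ncard_eq_toFinset_card' c.supp]
  exact add_four_le_of_sq_le hd hn (by nlinarith)
    (sq_sum_card_neighborFinset_inter_le hC4 A)

/-- Every connected component of `G \ T`, for a nontrivial minimum edge-cut `T` of a
`d`-regular C₄-free graph with `d ≥ 4`, has at least `d + 4` vertices. -/
theorem stmt5 {V : Type*} [Fintype V] (G : SimpleGraph V) [DecidableRel G.Adj]
    (d : ℕ) (hd : 4 ≤ d) (hreg : G.IsRegularOfDegree d) (hC4 : ¬ HasC4 G)
    (hconn : G.Connected)
    (T : Finset (Sym2 V)) (hmin : IsMinEdgeCut G T) (hnt : ¬ IsTrivialEdgeCut G T)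
    (c : (G.deleteEdges ↑T).ConnectedComponent) :
    d + 4 ≤ c.supp.ncard :=
  stmt5_general G d hd hreg hC4 T hmin hnt c
end

section
/- Let d ≥ 4 and let G be a d-regular graph with no 4-cycle, T a nontrivial minimum edge-cut of G, and G₁ a connected component of G \ T. Let A₁ be the set of vertices of G₁ incident to an edge of T. Then there exists a vertex a ∈ V(G₁) \ A₁ such that a has at most 2 neighbors (in G) inside A₁. -/
open Finset SimpleGraph

section EdgeCut

variable {V : Type*} {G : SimpleGraph V} {T : Finset (Sym2 V)}

lemma IsEdgeCut.exists_ne (hT : IsEdgeCut G T) (v : V) : ∃ u, u ≠ v := by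
  by_contra! h
  exact hT.2 ((connected_iff _).2 ⟨fun x y => (h x).trans (h y).symm ▸ Reachable.refl x, ⟨v⟩⟩)

lemma isEdgeCut_incidenceFinset [DecidableEq V] {u v : V} [Fintype (G.neighborSet v)]
    (huv : u ≠ v) : IsEdgeCut G (G.incidenceFinset v) := by
  refine ⟨by simpa using G.incidenceSet_subset v, fun hconn => ?_⟩
  obtain ⟨p⟩ := hconn.preconnected v u
  cases p with
  | nil => exact huv rfl
  | cons h _ =>
    rw [deleteEdges_adj] at h
    exact h.2 (by simpa using h.1)

lemma IsMinEdgeCut.card_le_degree [DecidableEq V] (hT : IsMinEdgeCut G T) (v : V)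
    [Fintype (G.neighborSet v)] : #T ≤ G.degree v := by
  obtain ⟨u, hu⟩ := hT.1.exists_ne v
  simpa using hT.2 _ (isEdgeCut_incidenceFinset hu)

/-- Otherwise `T` minus this edge would be a smaller cut. -/
lemma IsMinEdgeCut.not_reachable [DecidableEq V] (hT : IsMinEdgeCut G T) {x y : V}
    (hxy : s(x, y) ∈ T) : ¬ (G.deleteEdges ↑T).Reachable x y := by
  intro hreach
  have hle : (G.deleteEdges ↑(T.erase s(x, y))).Adj ≤
      Relation.ReflTransGen (G.deleteEdges ↑T).Adj := by
    intro a b hab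
    rw [deleteEdges_adj] at hab
    by_cases hmem : s(a, b) ∈ T
    · have : s(a, b) = s(x, y) := by
        by_contra hne
        exact hab.2 (by simpa [hne] using hmem)
      rw [← reachable_iff_reflTransGen]
      rcases Sym2.eq_iff.1 this with ⟨rfl, rfl⟩ | ⟨rfl, rfl⟩
      · exact hreach
      · exact hreach.symm
    · exact Relation.ReflTransGen.single (by simpa [deleteEdges_adj] using ⟨hab.1, hmem⟩)
  have hcut : IsEdgeCut G (T.erase s(x, y)) := by
    refine ⟨fun e he => hT.1.1 (mem_of_mem_erase he), fun hconn => hT.1.2 ?_⟩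
    refine (connected_iff _).2 ⟨fun a b => ?_, hconn.nonempty⟩
    rw [reachable_iff_reflTransGen]
    exact Relation.reflTransGen_closed hle _ _
      ((reachable_iff_reflTransGen _ _).1 (hconn.preconnected a b))
  have := hT.2 _ hcut
  rw [card_erase_of_mem hxy] at this
  have := card_pos.2 ⟨_, hxy⟩
  omega

end EdgeCut

/-! In what follows `C` is a set of vertices with `hclosed` (no edge of `G \ T` leaves `C`) and
`hsep` (no edge of `T` has both ends in `C`), as for a component of `G \ T` when `T` is a
minimum cut. -/

section Side

variable {V : Type*} {G : SimpleGraph V} {T : Finset (Sym2 V)} [DecidableEq V]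

def cutDegree (T : Finset (Sym2 V)) (v : V) : ℕ := #{e ∈ T | v ∈ e}

lemma cutDegree_eq_zero_iff {v : V} : cutDegree T v = 0 ↔ ¬ ∃ e ∈ T, v ∈ e := by
  simp [cutDegree, filter_eq_empty_iff]

lemma sum_cutDegree_le_card {D : Finset V} (hsep : ∀ x ∈ D, ∀ y ∈ D, s(x, y) ∉ T) :
    ∑ v ∈ D, cutDegree T v ≤ #T := by
  have hle : ∀ e ∈ T, #(D.bipartiteBelow (· ∈ ·) e) ≤ 1 := by
    intro e he
    refine card_le_one.2 fun x hx y hy => ?_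
    simp only [mem_bipartiteBelow] at hx hy
    by_contra hxy
    exact hsep x hx.1 y hy.1 ((Sym2.mem_and_mem_iff hxy).1 ⟨hx.2, hy.2⟩ ▸ he)
  calc ∑ v ∈ D, cutDegree T v = ∑ e ∈ T, #(D.bipartiteBelow (· ∈ ·) e) :=
        sum_card_bipartiteAbove_eq_sum_card_bipartiteBelow _
    _ ≤ ∑ _e ∈ T, 1 := sum_le_sum hle
    _ = #T := by simp

lemma card_le_card_of_forall_exists_mem {D : Finset V} (hsep : ∀ x ∈ D, ∀ y ∈ D, s(x, y) ∉ T)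
    (hcover : ∀ v ∈ D, ∃ e ∈ T, v ∈ e) : #D ≤ #T :=
  calc #D = ∑ _v ∈ D, 1 := by simp
    _ ≤ ∑ v ∈ D, cutDegree T v := sum_le_sum fun v hv =>
      Nat.one_le_iff_ne_zero.2 (cutDegree_eq_zero_iff.not_left.2 (hcover v hv))
    _ ≤ #T := sum_cutDegree_le_card hsep

variable [Fintype V] [DecidableRel G.Adj]

lemma degree_le_card_neighborFinset_inter_add_cutDegree {C : Finset V}
    (hclosed : ∀ x ∈ C, ∀ y, G.Adj x y → s(x, y) ∉ T → y ∈ C) {v : V} (hv : v ∈ C) :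
    G.degree v ≤ #(G.neighborFinset v ∩ C) + cutDegree T v := by
  rw [← card_neighborFinset_eq_degree, ← card_inter_add_card_sdiff (G.neighborFinset v) C]
  gcongr
  refine card_le_card_of_injOn (fun w => s(v, w)) (fun w hw => ?_)
    (fun _ _ _ _ h => Sym2.congr_right.1 h)
  simp only [coe_sdiff, Set.mem_sdiff, mem_coe, mem_neighborFinset] at hw
  simp only [coe_filter, Set.mem_ofPred_eq, Sym2.mem_mk_left, and_true]
  by_contra hT
  exact hw.2 (hclosed v hv w hw.1 hT)

lemma card_neighborFinset_inter_le_one (hC4 : ¬ HasC4 G) {u w : V} (huw : u ≠ w) :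
    #(G.neighborFinset u ∩ G.neighborFinset w) ≤ 1 := by
  refine card_le_one.2 fun x hx y hy => ?_
  simp only [mem_inter, mem_neighborFinset] at hx hy
  by_contra hxy
  exact hC4 ⟨u, x, w, y, hx.1.ne, huw, hy.1.ne, hx.2.ne.symm, hxy, hy.2.ne, hx.1, hx.2.symm,
    hy.2, hy.1.symm⟩

lemma neighborFinset_inter_eq_singleton (hC4 : ¬ HasC4 G) {u v w : V} (huw : u ≠ w)
    (hu : G.Adj u v) (hw : G.Adj w v) : G.neighborFinset u ∩ G.neighborFinset w = {v} := by
  have hv : v ∈ G.neighborFinset u ∩ G.neighborFinset w := by simp [hu, hw]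
  exact eq_singleton_iff_unique_mem.2
    ⟨hv, fun x hx => card_le_one.1 (card_neighborFinset_inter_le_one hC4 huw) x hx v hv⟩

/-- The sets `{v}`, `N = N(v) ∩ C` and `S w = (N(w) ∩ C) \ ({v} ∪ N(v))` for `w ∈ N` are
disjoint subsets of `C`: two `S w` meeting, or `w` having two neighbours in `{v} ∪ N(v)`,
would close a 4-cycle. Each `S w` has at least `d - 2 - t w` elements. -/
lemma one_add_mul_card_add_cutDegree_le {d : ℕ} (hreg : G.IsRegularOfDegree d)
    (hC4 : ¬ HasC4 G) {C : Finset V} (hclosed : ∀ x ∈ C, ∀ y, G.Adj x y → s(x, y) ∉ T → y ∈ C)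
    (hsep : ∀ x ∈ C, ∀ y ∈ C, s(x, y) ∉ T) {v : V} (hv : v ∈ C) :
    1 + (d - 1) * #(G.neighborFinset v ∩ C) + cutDegree T v ≤ #C + #T := by
  set N := G.neighborFinset v ∩ C
  set S : V → Finset V := fun w => (G.neighborFinset w ∩ C) \ insert v (G.neighborFinset v)
  have hvN : v ∉ N := by simp [N]
  have hN : ∀ w ∈ N, G.Adj w v := fun w hw =>
    ((G.mem_neighborFinset v w).1 (mem_inter.1 hw).1).symm
  have hS : ∀ w ∈ N, d ≤ #(S w) + 2 + cutDegree T w := by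
    intro w hw
    obtain ⟨hvw, hwC⟩ : G.Adj v w ∧ w ∈ C := by simpa [N] using hw
    have hback : (G.neighborFinset w ∩ C) ∩ insert v (G.neighborFinset v) ⊆
        insert v (G.neighborFinset w ∩ G.neighborFinset v) := by
      intro x hx
      simp only [mem_inter, mem_insert] at hx ⊢
      tauto
    have h₁ := card_sdiff_add_card_inter (G.neighborFinset w ∩ C) (insert v (G.neighborFinset v))
    have h₂ := (card_le_card hback).trans (card_insert_le _ _)
    have h₃ := card_neighborFinset_inter_le_one hC4 hvw.ne'
    have h₄ := degree_le_card_neighborFinset_inter_add_cutDegree hclosed hwC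
    rw [hreg w] at h₄
    dsimp only [S]
    omega
  have hdisj : (N : Set V).PairwiseDisjoint S := by
    intro w₁ h₁ w₂ h₂ hne
    refine disjoint_left.2 fun x hx₁ hx₂ => ?_
    simp only [S, mem_sdiff, mem_inter, mem_insert] at hx₁ hx₂
    have hx : x ∈ G.neighborFinset w₁ ∩ G.neighborFinset w₂ := mem_inter.2 ⟨hx₁.1.1, hx₂.1.1⟩
    rw [neighborFinset_inter_eq_singleton hC4 hne (hN w₁ h₁) (hN w₂ h₂), mem_singleton] at hx
    exact hx₁.2 (Or.inl hx)
  have hcover : 1 + #N + ∑ w ∈ N, #(S w) ≤ #C := by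
    rw [← card_biUnion hdisj]
    have : Disjoint (insert v N) (N.biUnion S) := by
      refine disjoint_right.2 fun x hx hxN => ?_
      obtain ⟨w, -, hxw⟩ := mem_biUnion.1 hx
      simp only [S, N, mem_sdiff, mem_insert, mem_inter] at hxw hxN
      tauto
    calc 1 + #N + #(N.biUnion S) = #(insert v N ∪ N.biUnion S) := by
          rw [card_union_of_disjoint this, card_insert_of_notMem hvN, add_comm 1]
      _ ≤ #C := card_le_card (union_subset (insert_subset hv inter_subset_right)
          (biUnion_subset.2 fun w _ => sdiff_subset.trans inter_subset_right))
  have hcut : cutDegree T v + ∑ w ∈ N, cutDegree T w ≤ #T := by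
    rw [← sum_insert hvN]
    have hsub : insert v N ⊆ C := insert_subset hv inter_subset_right
    exact sum_cutDegree_le_card fun x hx y hy => hsep x (hsub hx) y (hsub hy)
  have hsum : d * #N ≤ ∑ w ∈ N, #(S w) + 2 * #N + ∑ w ∈ N, cutDegree T w := by
    have := card_nsmul_le_sum N (fun w => #(S w) + 2 + cutDegree T w) d hS
    simpa [sum_add_distrib, mul_comm] using this
  rw [Nat.sub_mul, one_mul]
  omega

lemma isTrivialEdgeCut_of_singleton {v : V}
    (hclosed : ∀ x ∈ ({v} : Finset V), ∀ y, G.Adj x y → s(x, y) ∉ T → y ∈ ({v} : Finset V))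
    (hcard : #T ≤ G.degree v) : IsTrivialEdgeCut G T := by
  have hsub : G.incidenceFinset v ⊆ T := by
    intro e he
    obtain ⟨he, hve⟩ := (G.mem_incidenceFinset v e).1 he
    obtain ⟨w, rfl⟩ := Sym2.mem_iff_exists.1 hve
    by_contra hT
    have hw := hclosed v (mem_singleton_self v) w he hT
    exact G.irrefl (mem_singleton.1 hw ▸ he)
  refine ⟨v, ?_⟩
  rw [← eq_of_subset_of_card_le hsub (by simpa using hcard), coe_incidenceFinset]
  rfl

lemma exists_mem_forall_notMem_of_not_isTrivialEdgeCut {d : ℕ} (hd : 4 ≤ d)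
    (hreg : G.IsRegularOfDegree d) (hC4 : ¬ HasC4 G) (hTd : #T ≤ d)
    (hnt : ¬ IsTrivialEdgeCut G T) {C : Finset V} (hC : C.Nonempty)
    (hclosed : ∀ x ∈ C, ∀ y, G.Adj x y → s(x, y) ∉ T → y ∈ C)
    (hsep : ∀ x ∈ C, ∀ y ∈ C, s(x, y) ∉ T) : ∃ b ∈ C, ¬ ∃ e ∈ T, b ∈ e := by
  by_contra! hcover
  have hCT := card_le_card_of_forall_exists_mem hsep hcover
  obtain ⟨v, hv⟩ := hC
  obtain ⟨u, hu, huv⟩ : ∃ u ∈ C, u ≠ v := by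
    by_contra! hCv
    obtain rfl : C = {v} := eq_singleton_iff_unique_mem.2 ⟨hv, hCv⟩
    exact hnt (isTrivialEdgeCut_of_singleton hclosed (hTd.trans (hreg v).ge))
  have hpair : cutDegree T u + cutDegree T v ≤ #T := by
    have hsub : {u, v} ⊆ C := insert_subset hu (singleton_subset_iff.2 hv)
    simpa [sum_pair huv] using
      sum_cutDegree_le_card (D := {u, v}) fun x hx y hy => hsep x (hsub hx) y (hsub hy)
  have hku := one_add_mul_card_add_cutDegree_le hreg hC4 hclosed hsep hu
  have hkv := one_add_mul_card_add_cutDegree_le hreg hC4 hclosed hsep hv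
  have hdu := degree_le_card_neighborFinset_inter_add_cutDegree hclosed hu
  have hdv := degree_le_card_neighborFinset_inter_add_cutDegree hclosed hv
  rw [hreg u] at hdu
  rw [hreg v] at hdv
  -- with `s = t u + t v ≤ d`, adding the two bounds gives `d² ≤ (d - 1)(2d - s) + s ≤ 4d - 2`
  obtain ⟨k, rfl⟩ : ∃ k, d = k + 1 := ⟨d - 1, by omega⟩
  simp only [Nat.add_sub_cancel] at hku hkv
  nlinarith

lemma exists_mem_card_filter_adj_le_two {d : ℕ} (hd : 4 ≤ d) (hreg : G.IsRegularOfDegree d)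
    (hC4 : ¬ HasC4 G) (hTE : ↑T ⊆ G.edgeSet) (hTd : #T ≤ d) {C : Finset V}
    (hclosed : ∀ x ∈ C, ∀ y, G.Adj x y → s(x, y) ∉ T → y ∈ C)
    (hsep : ∀ x ∈ C, ∀ y ∈ C, s(x, y) ∉ T) {b : V} (hb : b ∈ C) (hbT : ¬ ∃ e ∈ T, b ∈ e) :
    ∃ a ∈ C, (¬ ∃ e ∈ T, a ∈ e) ∧ #{x ∈ C | (∃ e ∈ T, x ∈ e) ∧ G.Adj a x} ≤ 2 := by
  set A := {x ∈ C | ∃ e ∈ T, x ∈ e}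
  set B := {x ∈ C | ¬ ∃ e ∈ T, x ∈ e}
  by_contra hcon
  have hBA : ∀ a ∈ B, 3 ≤ #(A.bipartiteAbove G.Adj a) := by
    intro a ha
    obtain ⟨haC, haT⟩ := mem_filter.1 ha
    by_contra! hlt
    exact hcon ⟨a, haC, haT, by
      simpa [A, bipartiteAbove, filter_filter] using Nat.le_of_lt_succ hlt⟩
  have hAB : ∀ a ∈ A, #(B.bipartiteBelow G.Adj a) ≤ d - 1 := by
    intro a ha
    obtain ⟨haC, e, he, hae⟩ := mem_filter.1 ha
    obtain ⟨y, rfl⟩ := Sym2.mem_iff_exists.1 hae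
    have hay : G.Adj a y := hTE he
    have hyB : y ∉ B := fun hy => hsep a haC y (mem_filter.1 hy).1 he
    calc #(B.bipartiteBelow G.Adj a) ≤ #((G.neighborFinset a).erase y) := by
          refine card_le_card fun x hx => ?_
          simp only [mem_bipartiteBelow] at hx
          exact mem_erase.2 ⟨fun hxy => hyB (hxy ▸ hx.1), by simpa using hx.2.symm⟩
      _ = d - 1 := by
          rw [card_erase_of_mem (by simpa using hay), card_neighborFinset_eq_degree, hreg a]
  have hdc := card_mul_le_card_mul G.Adj hBA hAB
  have hAT : #A ≤ #T := card_le_card_of_forall_exists_mem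
    (fun x hx y hy => hsep x (filter_subset _ _ hx) y (filter_subset _ _ hy))
    (fun x hx => (mem_filter.1 hx).2)
  have hCAB : #A + #B = #C := card_filter_add_card_filter_not _
  have hkey := one_add_mul_card_add_cutDegree_le hreg hC4 hclosed hsep hb
  have hdeg := degree_le_card_neighborFinset_inter_add_cutDegree hclosed hb
  rw [hreg b, cutDegree_eq_zero_iff.2 hbT] at hdeg
  rw [cutDegree_eq_zero_iff.2 hbT] at hkey
  -- `3|C| ≤ (d + 2)|A| ≤ (d + 2)d`, against `|C| ≥ 1 + (d - 1)d - d`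
  obtain ⟨k, rfl⟩ : ∃ k, d = k + 1 := ⟨d - 1, by omega⟩
  simp only [Nat.add_sub_cancel] at hkey hdc
  nlinarith

end Side

theorem stmt6_general {V : Type*} [Fintype V] (G : SimpleGraph V) [DecidableRel G.Adj]
    (d : ℕ) (hd : 4 ≤ d) (hreg : G.IsRegularOfDegree d) (hC4 : ¬ HasC4 G)
    (T : Finset (Sym2 V)) (hmin : IsMinEdgeCut G T) (hnt : ¬ IsTrivialEdgeCut G T)
    (c : (G.deleteEdges ↑T).ConnectedComponent) :
    ∃ a ∈ c.supp, ¬ (∃ e ∈ T, a ∈ e) ∧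
      (G.neighborSet a ∩ (c.supp ∩ {x | ∃ e ∈ T, x ∈ e})).ncard ≤ 2 := by
  classical
  set C := c.supp.toFinset
  have hclosed : ∀ x ∈ C, ∀ y, G.Adj x y → s(x, y) ∉ T → y ∈ C := fun x hx y hxy hT => by
    simpa [C] using (c.mem_supp_congr_adj (deleteEdges_adj.2 ⟨hxy, hT⟩)).1 (by simpa [C] using hx)
  have hsep : ∀ x ∈ C, ∀ y ∈ C, s(x, y) ∉ T := fun x hx y hy hxy => by
    simp only [C, Set.mem_toFinset, ConnectedComponent.mem_supp_iff] at hx hy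
    exact hmin.not_reachable hxy (ConnectedComponent.exact (hx.trans hy.symm))
  obtain ⟨v, hv⟩ := c.nonempty_supp
  have hTd : #T ≤ d := hreg.degree_eq v ▸ hmin.card_le_degree v
  obtain ⟨b, hb, hbT⟩ := exists_mem_forall_notMem_of_not_isTrivialEdgeCut hd hreg hC4 hTd hnt
    ⟨v, by simpa [C] using hv⟩ hclosed hsep
  obtain ⟨a, ha, haT, h2⟩ :=
    exists_mem_card_filter_adj_le_two hd hreg hC4 hmin.1.1 hTd hclosed hsep hb hbT
  refine ⟨a, by simpa [C] using ha, haT, ?_⟩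
  rw [← Set.ncard_coe_finset] at h2
  convert h2 using 2
  ext x
  simp only [Set.mem_inter_iff, mem_neighborSet, Set.mem_ofPred_eq, coe_filter, C,
    Set.mem_toFinset]
  tauto

/-- Lemma 1: in a `d`-regular C₄-free graph (`d ≥ 4`) with a nontrivial minimum
edge-cut `T`, every component `G₁` of `G \ T` contains a vertex `a` outside
`A₁ = V(G₁) ∩ sat(T)` having at most two neighbors in `A₁`. -/
theorem stmt6 {V : Type*} [Fintype V] (G : SimpleGraph V) [DecidableRel G.Adj]
    (d : ℕ) (hd : 4 ≤ d) (hreg : G.IsRegularOfDegree d) (hC4 : ¬ HasC4 G)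
    (hconn : G.Connected)
    (T : Finset (Sym2 V)) (hmin : IsMinEdgeCut G T) (hnt : ¬ IsTrivialEdgeCut G T)
    (c : (G.deleteEdges ↑T).ConnectedComponent) :
    ∃ a ∈ c.supp, ¬ (∃ e ∈ T, a ∈ e) ∧
      (G.neighborSet a ∩ (c.supp ∩ {x | ∃ e ∈ T, x ∈ e})).ncard ≤ 2 :=
  stmt6_general G d hd hreg hC4 T hmin hnt c
end

section
/- The b-chromatic number of the Petersen graph is 3. -/
def IsBColoring {V : Type*} (G : SimpleGraph V) {k : ℕ} (f : V → Fin k) : Prop :=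
  (∀ u v, G.Adj u v → f u ≠ f v) ∧
  ∀ c : Fin k, ∃ v, f v = c ∧ ∀ c' : Fin k, c' ≠ c → ∃ w, G.Adj v w ∧ f w = c'

noncomputable def bChromaticNumber {V : Type*} (G : SimpleGraph V) : ℕ :=
  sSup {k | ∃ f : V → Fin k, IsBColoring G f}

/-- The Petersen graph as the Kneser graph K(5,2): vertices are the 2-element
subsets of a 5-element set, adjacent iff disjoint. -/
def petersen : SimpleGraph {s : Finset (Fin 5) // s.card = 2} :=
  SimpleGraph.fromRel (fun a b => Disjoint (a : Finset (Fin 5)) (b : Finset (Fin 5)))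

instance : DecidableRel petersen.Adj := fun a b =>
  decidable_of_iff _ (SimpleGraph.fromRel_adj _ a b).symm

instance {V : Type*} [Fintype V] (G : SimpleGraph V) [DecidableRel G.Adj] {k : ℕ}
    (f : V → Fin k) : Decidable (IsBColoring G f) := by
  unfold IsBColoring; infer_instance

abbrev PV := {s : Finset (Fin 5) // s.card = 2}

def v01 : PV := ⟨{0,1}, by decide⟩
def v23 : PV := ⟨{2,3}, by decide⟩
def v24 : PV := ⟨{2,4}, by decide⟩
def v34 : PV := ⟨{3,4}, by decide⟩
def v02 : PV := ⟨{0,2}, by decide⟩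
def v03 : PV := ⟨{0,3}, by decide⟩
def v04 : PV := ⟨{0,4}, by decide⟩
def v12 : PV := ⟨{1,2}, by decide⟩
def v13 : PV := ⟨{1,3}, by decide⟩
def v14 : PV := ⟨{1,4}, by decide⟩

def F (a b c d e g : Fin 4) : PV → Fin 4 := fun v =>
  if v.1 = {0,1} then 0 else if v.1 = {2,3} then 1 else if v.1 = {2,4} then 2
  else if v.1 = {3,4} then 3 else if v.1 = {0,2} then a else if v.1 = {0,3} then b
  else if v.1 = {0,4} then c else if v.1 = {1,2} then d else if v.1 = {1,3} then e
  else g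

set_option maxHeartbeats 4000000 in
theorem keyNo4 : ∀ a e g b d c : Fin 4, ¬(a ≠ 3 ∧ e ≠ 2 ∧ g ≠ 1 ∧ a ≠ e ∧ a ≠ g ∧
    b ≠ 2 ∧ d ≠ 3 ∧ b ≠ d ∧ b ≠ g ∧ c ≠ 1 ∧ c ≠ d ∧ c ≠ e ∧
    IsBColoring petersen (F a b c d e g)) := by decide

def f3 : PV → Fin 3 := fun v => if (0:Fin 5) ∈ v.1 then 0 else if (1:Fin 5) ∈ v.1 then 1 else 2

theorem f3_b : IsBColoring petersen f3 := by decide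

theorem deg3 : ∀ v : PV, (petersen.neighborFinset v).card = 3 := by decide

theorem nbrs01 : ∀ w : PV, petersen.Adj v01 w ↔ (w = v23 ∨ w = v24 ∨ w = v34) := by decide

theorem allverts : ∀ w : PV, w = v01 ∨ w = v23 ∨ w = v24 ∨ w = v34 ∨ w = v02 ∨ w = v03 ∨
    w = v04 ∨ w = v12 ∨ w = v13 ∨ w = v14 := by decide

set_option maxHeartbeats 1000000 in
theorem transitive_wit : ∀ v : PV, ∃ π : Equiv.Perm (Fin 5),
    Finset.map π.toEmbedding v.1 = ({0,1} : Finset (Fin 5)) := by decide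

theorem permEx : ∀ x y z : Fin 4, ¬((x = 1 ∨ y = 1 ∨ z = 1) ∧ (x = 2 ∨ y = 2 ∨ z = 2) ∧
    (x = 3 ∨ y = 3 ∨ z = 3) ∧
    ¬∃ σ : Equiv.Perm (Fin 4), σ 0 = 0 ∧ σ x = 1 ∧ σ y = 2 ∧ σ z = 3) := by decide

def mapV (π : Equiv.Perm (Fin 5)) : PV ≃ PV where
  toFun s := ⟨s.1.map π.toEmbedding, by rw [Finset.card_map]; exact s.2⟩
  invFun s := ⟨s.1.map π.symm.toEmbedding, by rw [Finset.card_map]; exact s.2⟩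
  left_inv s := by ext x; simp [Finset.mem_map]
  right_inv s := by ext x; simp [Finset.mem_map]

def petersenIso (π : Equiv.Perm (Fin 5)) : petersen ≃g petersen where
  toEquiv := mapV π
  map_rel_iff' := by
    intro a b
    simp only [petersen, SimpleGraph.fromRel_adj, mapV, Equiv.coe_fn_mk]
    constructor
    · rintro ⟨hne, h⟩
      refine ⟨fun hh => hne (by rw [hh]), ?_⟩
      rcases h with h | h
      · exact Or.inl (by simpa [Finset.disjoint_map] using h)
      · exact Or.inr (by simpa [Finset.disjoint_map] using h)
    · rintro ⟨hne, h⟩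
      refine ⟨fun hh => hne (Subtype.ext (Finset.map_injective _ (congrArg Subtype.val hh))), ?_⟩
      rcases h with h | h
      · exact Or.inl (by simpa [Finset.disjoint_map] using h)
      · exact Or.inr (by simpa [Finset.disjoint_map] using h)

lemma bcol_perm {V : Type*} {G : SimpleGraph V} {k : ℕ} {f : V → Fin k}
    (hf : IsBColoring G f) (σ : Fin k ≃ Fin k) : IsBColoring G (σ ∘ f) := by
  obtain ⟨hp, hd⟩ := hf
  refine ⟨fun u v h hc => hp u v h (σ.injective hc), fun c => ?_⟩
  obtain ⟨v, hv, hdom⟩ := hd (σ.symm c)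
  refine ⟨v, by simp [hv], fun c' hc' => ?_⟩
  obtain ⟨w, hw, hfw⟩ := hdom (σ.symm c') (fun hh => hc' (by
    have := congrArg σ hh; simpa using this))
  exact ⟨w, hw, by simp [hfw]⟩

lemma bcol_iso {V : Type*} {G : SimpleGraph V} {k : ℕ} {f : V → Fin k}
    (hf : IsBColoring G f) (e : G ≃g G) : IsBColoring G (f ∘ e.symm) := by
  obtain ⟨hp, hd⟩ := hf
  constructor
  · intro u v h
    exact hp _ _ (e.symm.map_rel_iff.mpr h)
  · intro c
    obtain ⟨v, hv, hdom⟩ := hd c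
    refine ⟨e v, by simp [hv], fun c' hc' => ?_⟩
    obtain ⟨w, hw, hfw⟩ := hdom c' hc'
    exact ⟨e w, e.map_rel_iff.mpr hw, by simp [hfw]⟩

lemma le_four {k : ℕ} (f : PV → Fin k) (hf : IsBColoring petersen f) : k ≤ 4 := by
  by_contra hk
  push_neg at hk
  have hk0 : 0 < k := by omega
  obtain ⟨v, hv, hdom⟩ := hf.2 ⟨0, hk0⟩
  classical
  set z : Fin k := ⟨0, hk0⟩
  let W : Fin k → PV := fun c' => if h : c' = z then v else (hdom c' h).choose
  have hW : ∀ c', (h : c' ≠ z) → petersen.Adj v (W c') ∧ f (W c') = c' := by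
    intro c' h
    simp only [W, dif_neg h]
    exact (hdom c' h).choose_spec
  have hmaps : ∀ c' ∈ Finset.univ.erase z, W c' ∈ petersen.neighborFinset v := by
    intro c' hc'
    rw [SimpleGraph.mem_neighborFinset]
    exact (hW c' (Finset.ne_of_mem_erase hc')).1
  have hinj : Set.InjOn W (Finset.univ.erase z) := by
    intro c1 h1 c2 h2 heq
    have e1 := (hW c1 (by simpa using h1)).2
    have e2 := (hW c2 (by simpa using h2)).2
    rw [← e1, ← e2, heq]
  have := Finset.card_le_card_of_injOn W hmaps hinj
  rw [deg3 v, Finset.card_erase_of_mem (Finset.mem_univ z), Finset.card_univ,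
    Fintype.card_fin] at this
  omega

lemma no4 (f : PV → Fin 4) (hf : IsBColoring petersen f) : False := by
  obtain ⟨v, hv, hdom⟩ := hf.2 0
  obtain ⟨π, hπ⟩ := transitive_wit v
  set e := petersenIso π with he
  have hev : e v = v01 := Subtype.ext hπ
  have hf1 : IsBColoring petersen (f ∘ e.symm) := bcol_iso hf e
  set f1 : PV → Fin 4 := f ∘ e.symm with hf1def
  have h01 : f1 v01 = 0 := by
    rw [← hev]
    show f (e.symm (e v)) = 0
    rw [RelIso.symm_apply_apply]
    exact hv
  have hdom1 : ∀ c' : Fin 4, c' ≠ 0 → ∃ w, petersen.Adj v01 w ∧ f1 w = c' := by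
    intro c' hc'
    obtain ⟨w, hw, hfw⟩ := hdom c' hc'
    refine ⟨e w, ?_, ?_⟩
    · rw [← hev]; exact e.map_rel_iff.mpr hw
    · show f (e.symm (e w)) = c'
      rw [RelIso.symm_apply_apply]; exact hfw
  have fact : ∀ c : Fin 4, c ≠ 0 → (f1 v23 = c ∨ f1 v24 = c ∨ f1 v34 = c) := by
    intro c hc
    obtain ⟨w, hw, hfw⟩ := hdom1 c hc
    rcases (nbrs01 w).mp hw with rfl | rfl | rfl
    · exact Or.inl hfw
    · exact Or.inr (Or.inl hfw)
    · exact Or.inr (Or.inr hfw)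
  have hσ : ∃ σ : Equiv.Perm (Fin 4), σ 0 = 0 ∧ σ (f1 v23) = 1 ∧ σ (f1 v24) = 2 ∧
      σ (f1 v34) = 3 := by
    by_contra hno
    exact permEx (f1 v23) (f1 v24) (f1 v34)
      ⟨fact 1 (by decide), fact 2 (by decide), fact 3 (by decide), hno⟩
  obtain ⟨σ, hσ0, hσ1, hσ2, hσ3⟩ := hσ
  have hf2 : IsBColoring petersen (σ ∘ f1) := bcol_perm hf1 σ
  set f2 : PV → Fin 4 := σ ∘ f1 with hf2def
  have h2_01 : f2 v01 = 0 := by show σ (f1 v01) = 0; rw [h01, hσ0]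
  have h2_23 : f2 v23 = 1 := hσ1
  have h2_24 : f2 v24 = 2 := hσ2
  have h2_34 : f2 v34 = 3 := hσ3
  have hFeq : f2 = F (f2 v02) (f2 v03) (f2 v04) (f2 v12) (f2 v13) (f2 v14) := by
    funext w
    rcases allverts w with rfl | rfl | rfl | rfl | rfl | rfl | rfl | rfl | rfl | rfl
    · exact h2_01
    · exact h2_23
    · exact h2_24
    · exact h2_34
    · rfl
    · rfl
    · rfl
    · rfl
    · rfl
    · rfl
  have hp := hf2.1
  refine keyNo4 (f2 v02) (f2 v13) (f2 v14) (f2 v03) (f2 v12) (f2 v04)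
    ⟨?_, ?_, ?_, ?_, ?_, ?_, ?_, ?_, ?_, ?_, ?_, ?_, hFeq ▸ hf2⟩
  · rw [← h2_34]; exact hp v02 v34 (by decide)
  · rw [← h2_24]; exact hp v13 v24 (by decide)
  · rw [← h2_23]; exact hp v14 v23 (by decide)
  · exact hp v02 v13 (by decide)
  · exact hp v02 v14 (by decide)
  · rw [← h2_24]; exact hp v03 v24 (by decide)
  · rw [← h2_34]; exact hp v12 v34 (by decide)
  · exact hp v03 v12 (by decide)
  · exact hp v03 v14 (by decide)
  · rw [← h2_23]; exact hp v04 v23 (by decide)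
  · exact hp v04 v12 (by decide)
  · exact hp v04 v13 (by decide)

/-- The b-chromatic number of the Petersen graph is 3. -/
theorem stmt19 : bChromaticNumber petersen = 3 := by
  have hub : ∀ k ∈ {k | ∃ f : PV → Fin k, IsBColoring petersen f}, k ≤ 3 := by
    rintro k ⟨f, hf⟩
    by_contra hk
    push_neg at hk
    have h4 := le_four f hf
    have : k = 4 := by omega
    subst this
    exact no4 f hf
  have h3 : 3 ∈ {k | ∃ f : PV → Fin k, IsBColoring petersen f} := ⟨f3, f3_b⟩
  exact le_antisymm (csSup_le ⟨3, h3⟩ hub) (le_csSup ⟨3, hub⟩ h3)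
end
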